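/- arXiv:2107.09902 — 5 statements merged into one kernel-verified Lean document; each statement's English description precedes it below -/
import Mathlib

section
/- The generalized covering radius is subadditive: for any linear [n,k]_q code C and any t₁, t₂ ∈ ℕ, R_{t₁+t₂}(C) ≤ R_{t₁}(C) + R_{t₂}(C). In particular, R_t(C) ≤ t·R_1(C) for all t. -/
/-!
Split a `(t₁ + t₂)`-row matrix into its first `t₁` and last `t₂` rows and cover each block
optimally; the support of the combined difference is the union of the two supports, so its size
is at most the sum. Iterating from `R_0 = 0` gives `R_t ≤ t * R_1`.
-/

open Classical in
noncomputable def tWeight {ι F : Type*} [Fintype ι] [Zero F] {t : ℕ} (v : Fin t → ι → F) : ℕ :=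
  (Finset.univ.filter fun j : ι => ∃ i, v i j ≠ (0 : F)).card

noncomputable def genCovDist {ι F : Type*} [Fintype ι] [AddGroup F] {t : ℕ} (v c : Fin t → ι → F) : ℕ :=
  tWeight (v - c)

noncomputable def genCovRadius {ι F : Type*} [Fintype ι] [AddGroup F] (C : Set (ι → F)) (t : ℕ) : ℕ :=
  sInf {r : ℕ | ∀ v : Fin t → ι → F, ∃ c : Fin t → ι → F, (∀ i, c i ∈ C) ∧ genCovDist v c ≤ r}

def RM (r m : ℕ) : Set ((Fin m → ZMod 2) → ZMod 2) :=
  {f | ∃ p : MvPolynomial (Fin m) (ZMod 2), p.totalDegree ≤ r ∧ ∀ x, MvPolynomial.eval x p = f x}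

section GeneralizedCoveringRadius

variable {ι F : Type*} [Fintype ι]

lemma tWeight_le_card [Zero F] {t : ℕ} (v : Fin t → ι → F) : tWeight v ≤ Fintype.card ι := by
  classical
  unfold tWeight
  exact Finset.card_filter_le _ _

lemma tWeight_append_le [Zero F] {t₁ t₂ : ℕ} (v₁ : Fin t₁ → ι → F) (v₂ : Fin t₂ → ι → F) :
    tWeight (Fin.append v₁ v₂) ≤ tWeight v₁ + tWeight v₂ := by
  classical
  unfold tWeight
  refine le_trans (Finset.card_le_card fun j hj => ?_) (Finset.card_union_le _ _)
  simp only [Finset.mem_filter, Finset.mem_union, Finset.mem_univ, true_and] at hj ⊢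
  obtain ⟨i, hi⟩ := hj
  induction i using Fin.addCases with
  | left i => exact .inl ⟨i, by rwa [Fin.append_left] at hi⟩
  | right i => exact .inr ⟨i, by rwa [Fin.append_right] at hi⟩

variable [AddGroup F]

lemma genCovDist_append_le {t₁ t₂ : ℕ} (v₁ c₁ : Fin t₁ → ι → F) (v₂ c₂ : Fin t₂ → ι → F) :
    genCovDist (Fin.append v₁ v₂) (Fin.append c₁ c₂) ≤ genCovDist v₁ c₁ + genCovDist v₂ c₂ := by
  have hsub : Fin.append v₁ v₂ - Fin.append c₁ c₂ = Fin.append (v₁ - c₁) (v₂ - c₂) := by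
    ext i : 1
    induction i using Fin.addCases <;> simp
  unfold genCovDist
  rw [hsub]
  exact tWeight_append_le _ _

lemma genCovRadius_le {C : Set (ι → F)} {t r : ℕ}
    (h : ∀ v : Fin t → ι → F, ∃ c : Fin t → ι → F, (∀ i, c i ∈ C) ∧ genCovDist v c ≤ r) :
    genCovRadius C t ≤ r :=
  Nat.sInf_le h

-- For empty `C` the defining set is empty and `sInf` returns the junk value `0`.
lemma exists_genCovDist_le_genCovRadius {C : Set (ι → F)} (hC : C.Nonempty) {t : ℕ}
    (v : Fin t → ι → F) :
    ∃ c : Fin t → ι → F, (∀ i, c i ∈ C) ∧ genCovDist v c ≤ genCovRadius C t := by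
  obtain ⟨c₀, hc₀⟩ := hC
  refine Nat.sInf_mem (s := {r | ∀ v : Fin t → ι → F, ∃ c : Fin t → ι → F,
    (∀ i, c i ∈ C) ∧ genCovDist v c ≤ r}) ⟨Fintype.card ι, fun v => ?_⟩ v
  exact ⟨fun _ => c₀, fun _ => hc₀, tWeight_le_card _⟩

lemma genCovRadius_add_le {C : Set (ι → F)} (hC : C.Nonempty) (t₁ t₂ : ℕ) :
    genCovRadius C (t₁ + t₂) ≤ genCovRadius C t₁ + genCovRadius C t₂ := by
  refine genCovRadius_le fun v => ?_
  obtain ⟨c₁, hc₁, hd₁⟩ := exists_genCovDist_le_genCovRadius hC (fun i => v (Fin.castAdd t₂ i))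
  obtain ⟨c₂, hc₂, hd₂⟩ := exists_genCovDist_le_genCovRadius hC (fun i => v (Fin.natAdd t₁ i))
  refine ⟨Fin.append c₁ c₂, fun i => ?_, ?_⟩
  · induction i using Fin.addCases <;> simp [hc₁, hc₂]
  · rw [← Fin.append_castAdd_natAdd (f := v)]
    exact (genCovDist_append_le _ _ _ _).trans (add_le_add hd₁ hd₂)

lemma genCovRadius_zero (C : Set (ι → F)) : genCovRadius C 0 = 0 :=
  Nat.le_zero.mp <| genCovRadius_le fun v =>
    ⟨v, finZeroElim, by simp [genCovDist, tWeight]⟩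

lemma genCovRadius_le_mul_genCovRadius_one {C : Set (ι → F)} (hC : C.Nonempty) (t : ℕ) :
    genCovRadius C t ≤ t * genCovRadius C 1 := by
  induction t with
  | zero => simp [genCovRadius_zero]
  | succ t ih =>
    calc genCovRadius C (t + 1) ≤ genCovRadius C t + genCovRadius C 1 :=
          genCovRadius_add_le hC t 1
      _ ≤ (t + 1) * genCovRadius C 1 := by rw [add_mul, one_mul]; gcongr

end GeneralizedCoveringRadius

theorem stmt2_general (n : ℕ) (F : Type) [Field F]
    (C : Submodule F (Fin n → F)) (t₁ t₂ : ℕ) :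
    genCovRadius (C : Set (Fin n → F)) (t₁ + t₂)
      ≤ genCovRadius (C : Set (Fin n → F)) t₁ + genCovRadius (C : Set (Fin n → F)) t₂ ∧
    ∀ t : ℕ, genCovRadius (C : Set (Fin n → F)) t ≤ t * genCovRadius (C : Set (Fin n → F)) 1 :=
  ⟨genCovRadius_add_le ⟨0, C.zero_mem⟩ t₁ t₂,
    genCovRadius_le_mul_genCovRadius_one ⟨0, C.zero_mem⟩⟩

/-- subadditivity of the generalized covering radius:
R_{t₁+t₂}(C) ≤ R_{t₁}(C) + R_{t₂}(C), and in particular R_t(C) ≤ t·R_1(C). -/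
theorem stmt2 (q n k : ℕ) (F : Type) [Field F] [Fintype F] (hq : Fintype.card F = q)
    (C : Submodule F (Fin n → F)) (hdim : Module.finrank F ↥C = k) (t₁ t₂ : ℕ) :
    genCovRadius (C : Set (Fin n → F)) (t₁ + t₂)
      ≤ genCovRadius (C : Set (Fin n → F)) t₁ + genCovRadius (C : Set (Fin n → F)) t₂ ∧
    ∀ t : ℕ, genCovRadius (C : Set (Fin n → F)) t ≤ t * genCovRadius (C : Set (Fin n → F)) 1 :=
  stmt2_general n F C t₁ t₂
end

section
/- For all m, t ∈ ℕ, the t-th generalized covering radius of the binary repetition code of length 2^m (the Reed-Muller code RM(0,m)) equals 2^m − ⌈2^{m−t}⌉. -/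
/-!
Read a `t × n` matrix column by column, as a word of length `n` over the alphabet `F^t`; a matrix
of constant rows is then a constant word `b`, at distance `n - #{columns equal to b}`. By
pigeonhole some column value occurs at least `⌈n / |F|^t⌉` times, and distributing the columns as
evenly as possible over the alphabet shows that no better bound holds for every matrix.
-/

open Finset

def repetitionCode (ι F : Type*) : Set (ι → F) := Set.range (Function.const ι)

theorem RM_zero_eq_repetitionCode (m : ℕ) : RM 0 m = repetitionCode _ (ZMod 2) := by
  ext f
  constructor
  · rintro ⟨p, hp, he⟩
    have hC := MvPolynomial.totalDegree_eq_zero_iff_eq_C.1 (Nat.le_zero.1 hp)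
    exact ⟨p.coeff 0, funext fun x => by rw [← he x, hC]; simp⟩
  · rintro ⟨a, rfl⟩
    exact ⟨MvPolynomial.C a, by simp, fun x => by simp⟩

section Fibers

variable {ι α : Type*} [Fintype ι] [Fintype α] [DecidableEq α]

theorem exists_ceil_card_div_le_card_fiber [Nonempty α] (f : ι → α) :
    ∃ b, ⌈(Fintype.card ι : ℝ) / Fintype.card α⌉₊ ≤ #{j | f j = b} := by
  obtain ⟨b, -, hb⟩ := exists_max_image univ (fun b => #{j | f j = b}) univ_nonempty
  refine ⟨b, Nat.ceil_le.2 <| (div_le_iff₀' (by positivity)).2 ?_⟩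
  have : Fintype.card ι ≤ Fintype.card α * #{j | f j = b} :=
    calc Fintype.card ι = ∑ b', #{j | f j = b'} := card_eq_sum_card_fiberwise (by simp)
      _ ≤ ∑ _b' : α, #{j | f j = b} := sum_le_sum fun b' _ => hb b' (mem_univ _)
      _ = Fintype.card α * #{j | f j = b} := by simp
  exact_mod_cast this

theorem exists_card_fiber_le {q : ℕ} (h : Fintype.card ι ≤ Fintype.card α * q) :
    ∃ f : ι → α, ∀ b, #{j | f j = b} ≤ q := by
  set e := Fintype.equivFin ι
  set e' := Fintype.equivFin α
  have hlt (j : ι) : (e j : ℕ) / q < Fintype.card α :=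
    Nat.div_lt_of_lt_mul ((e j).2.trans_le (h.trans_eq (mul_comm _ _)))
  refine ⟨fun j => e'.symm ⟨e j / q, hlt j⟩, fun b => ?_⟩
  have hfiber {j : ι} (hj : j ∈ ({j | e'.symm ⟨e j / q, hlt j⟩ = b} : Finset ι)) :
      (e j : ℕ) = q * e' b + e j % q := by
    rw [mem_filter, Equiv.symm_apply_eq] at hj
    have hdiv : (e j : ℕ) / q = e' b := congrArg Fin.val hj.2
    rw [← hdiv, Nat.div_add_mod]
  rcases Nat.eq_zero_or_pos q with rfl | hq
  · have : IsEmpty ι := Fintype.card_eq_zero_iff.1 (by simpa using h)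
    simp
  calc #{j | e'.symm ⟨e j / q, hlt j⟩ = b} ≤ #(range q) :=
        card_le_card_of_injOn (fun j => (e j : ℕ) % q) (fun j _ => by simp [Nat.mod_lt _ hq])
          fun j₁ h₁ j₂ h₂ hmod => e.injective <| Fin.ext <| by
            rw [hfiber h₁, hfiber h₂]; exact congrArg _ hmod
    _ = q := card_range q

end Fibers

theorem tWeight_eq_card_sub {ι F : Type*} [Fintype ι] [Zero F] [DecidableEq F] {t : ℕ}
    (w : Fin t → ι → F) :
    tWeight w = Fintype.card ι - #{j | ∀ i, w i j = 0} := by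
  classical
  rw [tWeight, ← card_compl, compl_filter]
  simp

theorem genCovDist_const {ι F : Type*} [Fintype ι] [AddGroup F] [DecidableEq F] {t : ℕ}
    (v : Fin t → ι → F) (b : Fin t → F) :
    genCovDist v (fun i _ => b i) = Fintype.card ι - #{j | Function.swap v j = b} := by
  simp only [genCovDist, tWeight_eq_card_sub, Pi.sub_apply, sub_eq_zero, funext_iff,
    Function.swap]

theorem genCovRadius_repetitionCode (ι F : Type*) [Fintype ι] [AddGroup F] [Fintype F] (t : ℕ) :
    genCovRadius (repetitionCode ι F) t =
      Fintype.card ι - ⌈(Fintype.card ι : ℝ) / Fintype.card F ^ t⌉₊ := by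
  classical
  set q := ⌈(Fintype.card ι : ℝ) / Fintype.card F ^ t⌉₊
  have hq : Fintype.card ι ≤ Fintype.card (Fin t → F) * q := by
    have hle : (Fintype.card ι : ℝ) / Fintype.card F ^ t ≤ q := Nat.le_ceil _
    have := (div_le_iff₀ (by positivity)).1 hle
    rw [Fintype.card_fun, Fintype.card_fin, mul_comm]
    exact_mod_cast this
  have hcovered : Fintype.card ι - q ∈ {r : ℕ | ∀ v : Fin t → ι → F, ∃ c : Fin t → ι → F,
      (∀ i, c i ∈ repetitionCode ι F) ∧ genCovDist v c ≤ r} := fun v => by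
    obtain ⟨b, hb⟩ : ∃ b, q ≤ #{j | Function.swap v j = b} := by
      simpa only [Fintype.card_fun, Fintype.card_fin, Nat.cast_pow] using
        exists_ceil_card_div_le_card_fiber (Function.swap v)
    refine ⟨fun i _ => b i, fun i => ⟨b i, rfl⟩, ?_⟩
    rw [genCovDist_const]
    exact Nat.sub_le_sub_left hb _
  refine le_antisymm (Nat.sInf_le hcovered) (le_csInf ⟨_, hcovered⟩ fun r hr => ?_)
  obtain ⟨f, hf⟩ := exists_card_fiber_le hq
  obtain ⟨c, hc, hr⟩ := hr (Function.swap f)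
  choose b hb using hc
  obtain rfl : (fun i _ => b i) = c := funext hb
  rw [genCovDist_const] at hr
  exact (Nat.sub_le_sub_left (hf b) _).trans hr

/-- R_t(RM(0,m)) = 2^m − ⌈2^{m−t}⌉ for the binary repetition code
RM(0,m) of length 2^m. -/
theorem stmt4 (m t : ℕ) :
    (genCovRadius (RM 0 m) t : ℤ) = 2 ^ m - ⌈(2 : ℝ) ^ ((m : ℤ) - (t : ℤ))⌉ := by
  have hpow : (2 : ℝ) ^ ((m : ℤ) - (t : ℤ)) = 2 ^ m / 2 ^ t := by
    rw [zpow_sub₀ two_ne_zero, zpow_natCast, zpow_natCast]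
  have hceil_le : ⌈(2 : ℝ) ^ m / 2 ^ t⌉₊ ≤ 2 ^ m :=
    Nat.ceil_le.2 <| by
      rw [Nat.cast_pow, Nat.cast_ofNat]
      exact div_le_self (by positivity) (one_le_pow₀ one_le_two)
  rw [RM_zero_eq_repetitionCode, genCovRadius_repetitionCode]
  simp only [Fintype.card_fun, Fintype.card_fin, ZMod.card, Nat.cast_pow, Nat.cast_ofNat]
  rw [Nat.cast_sub hceil_le, hpow, ← Int.natCast_ceil_eq_ceil (by positivity)]
  norm_cast
end

section
/- For all m, t ∈ ℕ, the t-th generalized covering radius of the binary extended Hamming code of length 2^m, i.e., RM(m−2,m), equals min{t, m} + 1. -/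
open Module Submodule Finset

section ParityCheck

variable {ι R V : Type*} [Fintype ι]

open Classical in
noncomputable def tSupport [Zero R] {t : ℕ} (v : Fin t → ι → R) : Finset ι :=
  univ.filter fun j => ∃ i, v i j ≠ 0

lemma mem_tSupport [Zero R] {t : ℕ} {v : Fin t → ι → R} {j : ι} :
    j ∈ tSupport v ↔ ∃ i, v i j ≠ 0 := by
  simp [tSupport]

lemma tWeight_le_card_s7 [Zero R] {t : ℕ} {v : Fin t → ι → R} {J : Finset ι}
    (hJ : ∀ i, ∀ j ∉ J, v i j = 0) : tWeight v ≤ #J := by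
  refine card_le_card fun j hj => ?_
  obtain ⟨i, hi⟩ := mem_tSupport.1 hj
  by_contra hjJ
  exact hi (hJ i j hjJ)

lemma genCovRadius_eq [AddGroup R] {C : Set (ι → R)} {t r : ℕ}
    (hcover : ∀ v : Fin t → ι → R, ∃ c, (∀ i, c i ∈ C) ∧ genCovDist v c ≤ r)
    (hfar : ∃ v : Fin t → ι → R, ∀ c, (∀ i, c i ∈ C) → r ≤ genCovDist v c) :
    genCovRadius C t = r := by
  obtain ⟨v, hv⟩ := hfar
  refine le_antisymm (Nat.sInf_le hcover) (le_csInf ⟨r, hcover⟩ fun s hs => ?_)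
  obtain ⟨c, hc, hcs⟩ := hs v
  exact (hv c hc).trans hcs

section Semiring

variable [Semiring R] [AddCommMonoid V] [Module R V] (h : ι → V)

lemma mem_span_image_iff_exists_linearCombination {J : Finset ι} {y : V} :
    y ∈ span R (h '' J) ↔
      ∃ e : ι → R, (∀ j ∉ J, e j = 0) ∧ Fintype.linearCombination R h e = y := by
  rw [Finsupp.mem_span_image_iff_linearCombination]
  constructor
  · rintro ⟨l, hl, rfl⟩
    refine ⟨l, fun j hj => ?_, ?_⟩
    · exact (Finsupp.mem_supported' R l).1 hl j hj
    · rw [← Finsupp.linearCombination_eq_fintype_linearCombination_apply,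
        Finsupp.linearEquivFunOnFinite_symm_coe]
  · rintro ⟨e, he, rfl⟩
    refine ⟨(Finsupp.linearEquivFunOnFinite R R ι).symm e, ?_,
      Finsupp.linearCombination_eq_fintype_linearCombination_apply R h e⟩
    exact (Finsupp.mem_supported' R _).2 he

lemma linearCombination_mem_span_tSupport {t : ℕ} (v : Fin t → ι → R) (i : Fin t) :
    Fintype.linearCombination R h (v i) ∈ span R (h '' tSupport v) :=
  (mem_span_image_iff_exists_linearCombination h).2
    ⟨v i, fun _ hj => by_contra fun hij => hj (mem_tSupport.2 ⟨i, hij⟩), rfl⟩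

end Semiring

abbrev parityCheckCode (R : Type*) [Ring R] [AddCommGroup V] [Module R V] (h : ι → V) :
    Submodule R (ι → R) :=
  LinearMap.ker (Fintype.linearCombination R h)

lemma exists_genCovDist_le_card [Ring R] [AddCommGroup V] [Module R V] (h : ι → V)
    {t : ℕ} (v : Fin t → ι → R) (J : Finset ι)
    (hJ : ∀ i, Fintype.linearCombination R h (v i) ∈ span R (h '' J)) :
    ∃ c : Fin t → ι → R, (∀ i, c i ∈ parityCheckCode R h) ∧ genCovDist v c ≤ #J := by
  choose e he hev using fun i => (mem_span_image_iff_exists_linearCombination h).1 (hJ i)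
  refine ⟨v - e, fun i => ?_, ?_⟩
  · simp [hev]
  · rw [genCovDist, sub_sub_cancel]
    exact tWeight_le_card_s7 he

/-- The columns on the support of `v - c` span every syndrome of `v`, and one of them lies
outside `ker φ`. -/
lemma finrank_span_linearCombination_inf_ker_lt_genCovDist
    [DivisionRing R] [AddCommGroup V] [Module R V] (h : ι → V) (φ : V →ₗ[R] R)
    (hφ : ∀ j, φ (h j) ≠ 0) {t : ℕ} (v c : Fin t → ι → R)
    (hc : ∀ i, c i ∈ parityCheckCode R h) (hv : ∃ i, v i ∉ parityCheckCode R h) :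
    finrank R ↥(span R (Set.range fun i => Fintype.linearCombination R h (v i)) ⊓
      LinearMap.ker φ) < genCovDist v c := by
  classical
  set W := span R (h '' tSupport (v - c))
  have hSW : span R (Set.range fun i => Fintype.linearCombination R h (v i)) ≤ W := by
    refine span_le.2 (Set.range_subset_iff.2 fun i => ?_)
    have := linearCombination_mem_span_tSupport h (v - c) i
    rwa [Pi.sub_apply, map_sub, (LinearMap.mem_ker.1 (hc i)), sub_zero] at this
  obtain ⟨i, hi⟩ := hv
  obtain ⟨j, hj⟩ : ∃ j, (v - c) i j ≠ 0 := by
    by_contra! hvc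
    exact hi (sub_eq_zero.1 (funext hvc : v i - c i = 0) ▸ hc i)
  have hW : W ⊓ LinearMap.ker φ < W :=
    inf_lt_left.2 fun hle => hφ j (hle (subset_span ⟨j, mem_tSupport.2 ⟨i, hj⟩, rfl⟩))
  have : FiniteDimensional R W :=
    FiniteDimensional.span_of_finite R ((tSupport (v - c)).finite_toSet.image h)
  calc finrank R ↥(span R _ ⊓ LinearMap.ker φ)
      ≤ finrank R ↥(W ⊓ LinearMap.ker φ) := finrank_mono (inf_le_inf_right _ hSW)
    _ < finrank R W := finrank_lt_finrank_of_lt hW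
    _ ≤ #((tSupport (v - c)).image h) := by
        have := finrank_span_finset_le_card (R := R) ((tSupport (v - c)).image h)
        rwa [Set.finrank, Finset.coe_image] at this
    _ ≤ genCovDist v c := card_image_le

end ParityCheck

section ExtendedHamming

def extHammingColumn (K : Type*) [One K] (m : ℕ) (x : Fin m → K) : Fin (m + 1) → K :=
  Fin.cons 1 x

variable {K : Type*} [Field K] {m : ℕ}

lemma extHammingColumn_sub_extHammingColumn_zero (b : Fin m → K) :
    extHammingColumn K m b - extHammingColumn K m 0 = Fin.cons 0 b := by
  ext j
  cases j using Fin.cases <;> simp [extHammingColumn]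

lemma mem_span_extHammingColumn_insert_zero {B : Set (Fin m → K)} {s : Fin (m + 1) → K}
    (hs : Fin.tail s ∈ span K B) :
    s ∈ span K (extHammingColumn K m '' insert 0 B) := by
  classical
  set W := span K (extHammingColumn K m '' insert 0 B)
  let cons0 : (Fin m → K) →ₗ[K] Fin (m + 1) → K :=
    (Fin.consLinearEquiv K fun _ => K).toLinearMap ∘ₗ LinearMap.inr K K _
  have hcons0 (b : Fin m → K) : cons0 b = Fin.cons 0 b := by
    ext j
    cases j using Fin.cases <;> simp [cons0]
  have hcol0 : extHammingColumn K m 0 ∈ W := subset_span ⟨0, by simp, rfl⟩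
  have hB : span K B ≤ W.comap cons0 := span_le.2 fun b hb => by
    rw [SetLike.mem_coe, mem_comap, hcons0, ← extHammingColumn_sub_extHammingColumn_zero]
    exact W.sub_mem (subset_span ⟨b, by simp [hb], rfl⟩) hcol0
  have hs_eq : s = s 0 • extHammingColumn K m 0 + cons0 (Fin.tail s) := by
    ext j
    cases j using Fin.cases <;> simp [hcons0, extHammingColumn, Fin.tail]
  rw [hs_eq]
  exact W.add_mem (W.smul_mem _ hcol0) (hB hs)

lemma exists_card_le_forall_mem_span_extHammingColumn {t : ℕ} (s : Fin t → Fin (m + 1) → K) :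
    ∃ J : Finset (Fin m → K), #J ≤ min t m + 1 ∧
      ∀ i, s i ∈ span K (extHammingColumn K m '' J) := by
  classical
  obtain ⟨B, hBcard, hB⟩ : ∃ B : Finset (Fin m → K), #B ≤ min t m ∧
      ∀ i, Fin.tail (s i) ∈ span K (B : Set (Fin m → K)) := by
    rcases le_total t m with htm | hmt
    · refine ⟨univ.image fun i => Fin.tail (s i), ?_, fun i => subset_span (by simp)⟩
      exact card_image_le.trans (by simp [htm])
    · refine ⟨univ.image (Pi.basisFun K (Fin m)), ?_, fun i => ?_⟩
      · exact card_image_le.trans (by simp [hmt])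
      · rw [coe_image, coe_univ, Set.image_univ, (Pi.basisFun K (Fin m)).span_eq]
        exact mem_top
  refine ⟨insert 0 B, (card_insert_le _ _).trans (Nat.succ_le_succ hBcard), fun i => ?_⟩
  rw [coe_insert]
  exact mem_span_extHammingColumn_insert_zero (hB i)

lemma exists_forall_le_genCovDist_of_pos [Fintype K] {t : ℕ} (ht : 1 ≤ t) (hm : 0 < m) :
    ∃ v : Fin t → (Fin m → K) → K, ∀ c, (∀ i, c i ∈ parityCheckCode K (extHammingColumn K m)) →
      min t m + 1 ≤ genCovDist v c := by
  classical
  let φ := LinearMap.proj (R := K) (φ := fun _ : Fin (m + 1) => K) 0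
  let y (i : Fin t) : Fin m → K := if h : (i : ℕ) < m then Pi.single ⟨i, h⟩ 1 else 0
  let v (i : Fin t) : (Fin m → K) → K := Pi.single (y i) 1 - Pi.single 0 1
  set d := min t m
  let f (k : Fin d) : Fin (m + 1) → K :=
    Pi.basisFun K (Fin (m + 1)) (Fin.castLE (min_le_right t m) k).succ
  have hf (k : Fin d) : Fintype.linearCombination K (extHammingColumn K m)
      (v (Fin.castLE (min_le_left t m) k)) = f k := by
    have hk : (k : ℕ) < m := k.2.trans_le (min_le_right t m)
    rw [map_sub, Fintype.linearCombination_apply_single, Fintype.linearCombination_apply_single,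
      one_smul, one_smul, extHammingColumn_sub_extHammingColumn_zero]
    ext j
    cases j using Fin.cases <;> simp [y, f, hk, Pi.single_apply, Fin.ext_iff]
  have hli : LinearIndependent K f := (Pi.basisFun K _).linearIndependent.comp _
    ((Fin.succ_injective _).comp (Fin.castLE_injective _))
  have hle : span K (Set.range f) ≤
      span K (Set.range fun i => Fintype.linearCombination K (extHammingColumn K m) (v i)) ⊓
        LinearMap.ker φ :=
    span_le.2 <| Set.range_subset_iff.2 fun k => ⟨subset_span ⟨_, hf k⟩, by simp [φ, f]⟩
  have hv : ∃ i, v i ∉ parityCheckCode K (extHammingColumn K m) := by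
    refine ⟨Fin.castLE (min_le_left t m) ⟨0, lt_min ht hm⟩, fun h0 => ?_⟩
    rw [LinearMap.mem_ker, hf] at h0
    exact hli.ne_zero _ h0
  refine ⟨v, fun c hc => ?_⟩
  calc d + 1 = finrank K (span K (Set.range f)) + 1 := by
        rw [finrank_span_eq_card hli, Fintype.card_fin]
    _ ≤ _ := Nat.succ_le_succ (finrank_mono hle)
    _ ≤ genCovDist v c :=
        finrank_span_linearCombination_inf_ker_lt_genCovDist _ φ (by simp [φ, extHammingColumn])
          v c hc hv

lemma exists_forall_le_genCovDist [Fintype K] {t : ℕ} (ht : 1 ≤ t) :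
    ∃ v : Fin t → (Fin m → K) → K, ∀ c, (∀ i, c i ∈ parityCheckCode K (extHammingColumn K m)) →
      min t m + 1 ≤ genCovDist v c := by
  rcases Nat.eq_zero_or_pos m with rfl | hm
  · classical
    let v : Fin t → (Fin 0 → K) → K := fun _ => Pi.single 0 1
    have hv : ∃ i, v i ∉ parityCheckCode K (extHammingColumn K 0) :=
      ⟨⟨0, ht⟩, fun h0 => by
        simpa [v, extHammingColumn] using congrFun (LinearMap.mem_ker.1 h0) 0⟩
    refine ⟨v, fun c hc => ?_⟩
    have := finrank_span_linearCombination_inf_ker_lt_genCovDist _ (LinearMap.proj 0)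
      (by simp [extHammingColumn]) v c hc hv
    omega
  · exact exists_forall_le_genCovDist_of_pos ht hm

theorem genCovRadius_extHamming [Fintype K] {t : ℕ} (ht : 1 ≤ t) :
    genCovRadius (parityCheckCode K (extHammingColumn K m) : Set ((Fin m → K) → K)) t =
      min t m + 1 := by
  refine genCovRadius_eq (fun v => ?_) (exists_forall_le_genCovDist ht)
  obtain ⟨J, hJcard, hJ⟩ :=
    exists_card_le_forall_mem_span_extHammingColumn fun i =>
      Fintype.linearCombination K (extHammingColumn K m) (v i)
  obtain ⟨c, hc, hvc⟩ := exists_genCovDist_le_card _ v J hJ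
  exact ⟨c, hc, hvc.trans hJcard⟩

end ExtendedHamming

/-- the t-th generalized covering radius of the binary extended Hamming
code of length 2^m (i.e. RM(m−2,m)), whose parity-check matrix has as columns all
binary vectors of length m+1 with first coordinate 1, equals min{t,m} + 1. -/
theorem stmt7 (m t : ℕ) (ht : 1 ≤ t) :
    genCovRadius
      {v : (Fin m → ZMod 2) → ZMod 2 |
        ∀ i : Fin (m + 1),
          ∑ x : Fin m → ZMod 2, v x * (Fin.cons 1 x : Fin (m + 1) → ZMod 2) i = 0} t
      = min t m + 1 := by
  convert genCovRadius_extHamming (K := ZMod 2) ht using 2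
  ext v
  simp [funext_iff, Fintype.linearCombination_apply, Finset.sum_apply, extHammingColumn]
end

section
/- For all integers n ≥ 1 and prime powers q ≥ 2, the smallest real root of the degree-2 Krawtchouk polynomial K₂(x; n, q) = (1/2)(q²x² − q(2qn − q − 2n + 2)x + (q−1)²n(n−1)) satisfies x(2,n;q) ≤ (1 − 1/q)·n − √((q−1)n)/q. -/
/-!
By the quadratic formula the smaller root of `K₂(x; n, q)` is
`((q - 1) n + 1 - q / 2 - √D / 2) / q` with `D = 4 (q - 1) n + (q - 2)²`.
Since `√D ≥ √(4 (q - 1) n) = 2 √((q - 1) n)` and `1 - q / 2 ≤ 0` for `q ≥ 2`,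
this root lies below `(1 - 1 / q) n - √((q - 1) n) / q`, and the least root can only be smaller.
-/

noncomputable section

namespace Krawtchouk

def krawtchouk₂ (q n x : ℝ) : ℝ :=
  (1 / 2) * (q ^ 2 * x ^ 2 - q * (2 * q * n - q - 2 * n + 2) * x + (q - 1) ^ 2 * n * (n - 1))

def smallerRoot (q n : ℝ) : ℝ :=
  ((q - 1) * n + 1 - q / 2 - √(4 * ((q - 1) * n) + (q - 2) ^ 2) / 2) / q

variable {q n : ℝ}

theorem krawtchouk₂_smallerRoot (hq : q ≠ 0) (hqn : 0 ≤ (q - 1) * n) :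
    krawtchouk₂ q n (smallerRoot q n) = 0 := by
  have hD := Real.sq_sqrt (by positivity : 0 ≤ 4 * ((q - 1) * n) + (q - 2) ^ 2)
  unfold krawtchouk₂ smallerRoot
  generalize √(4 * ((q - 1) * n) + (q - 2) ^ 2) = s at hD
  field_simp
  linear_combination hD

theorem smallerRoot_le (hq : 2 ≤ q) (hn : 0 ≤ n) :
    smallerRoot q n ≤ (1 - 1 / q) * n - √((q - 1) * n) / q := by
  have hqn : 0 ≤ (q - 1) * n := mul_nonneg (by linarith) hn
  have hsqrt : 2 * √((q - 1) * n) ≤ √(4 * ((q - 1) * n) + (q - 2) ^ 2) :=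
    Real.le_sqrt_of_sq_le (by nlinarith [Real.sq_sqrt hqn, sq_nonneg (q - 2)])
  have hq0 : 0 < q := by linarith
  rw [smallerRoot, div_le_iff₀ hq0]
  calc (q - 1) * n + 1 - q / 2 - √(4 * ((q - 1) * n) + (q - 2) ^ 2) / 2
      ≤ (q - 1) * n - √((q - 1) * n) := by linarith
    _ = ((1 - 1 / q) * n - √((q - 1) * n) / q) * q := by field_simp

end Krawtchouk

end

open Krawtchouk in
theorem stmt11_general (n q : ℕ) (hq2 : 2 ≤ q) (x₀ : ℝ)
    (hx : IsLeast {x : ℝ |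
        (1 / 2) * ((q : ℝ) ^ 2 * x ^ 2
          - (q : ℝ) * (2 * (q : ℝ) * (n : ℝ) - (q : ℝ) - 2 * (n : ℝ) + 2) * x
          + ((q : ℝ) - 1) ^ 2 * (n : ℝ) * ((n : ℝ) - 1)) = 0} x₀) :
    x₀ ≤ (1 - 1 / (q : ℝ)) * (n : ℝ) - Real.sqrt (((q : ℝ) - 1) * (n : ℝ)) / (q : ℝ) := by
  have hq : (2 : ℝ) ≤ q := by exact_mod_cast hq2
  have hn : (0 : ℝ) ≤ n := n.cast_nonneg
  have hroot : krawtchouk₂ q n (smallerRoot q n) = 0 :=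
    krawtchouk₂_smallerRoot (by positivity) (mul_nonneg (by linarith) hn)
  exact (hx.2 hroot).trans (smallerRoot_le hq hn)

/-- the smallest real root of the degree-2 Krawtchouk polynomial
K₂(x;n,q) = (1/2)(q²x² − q(2qn−q−2n+2)x + (q−1)²n(n−1)) is at most
(1 − 1/q)n − √((q−1)n)/q, for n ≥ 1 and prime powers q ≥ 2. -/
theorem stmt11 (n q : ℕ) (hn : 1 ≤ n) (hq2 : 2 ≤ q)
    (hq : ∃ p k : ℕ, p.Prime ∧ 0 < k ∧ q = p ^ k) (x₀ : ℝ)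
    (hx : IsLeast {x : ℝ |
        (1 / 2) * ((q : ℝ) ^ 2 * x ^ 2
          - (q : ℝ) * (2 * (q : ℝ) * (n : ℝ) - (q : ℝ) - 2 * (n : ℝ) + 2) * x
          + ((q : ℝ) - 1) ^ 2 * (n : ℝ) * ((n : ℝ) - 1)) = 0} x₀) :
    x₀ ≤ (1 - 1 / (q : ℝ)) * (n : ℝ) - Real.sqrt (((q : ℝ) - 1) * (n : ℝ)) / (q : ℝ) :=
  stmt11_general n q hq2 x₀ hx
end

section
/- For all m, t ∈ ℕ with m ≥ 1, R_t(1,m) ≤ (1 − 1/2^t)·2^m − (√(2^t − 1)/2^t)·2^{m/2}, where R_t(1,m) is the t-th generalized covering radius of the first-order Reed-Muller code RM(1,m). -/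
/-!
Fix words `v₁, …, v_t` and let `P = (P₁, …, P_t)` range over all `t`-tuples of affine functions
`x ↦ a ⬝ᵥ x + b`; let `A(P)` be the number of points where every `Pᵢ` agrees with `vᵢ`. Since the
dual of `RM(1,m)` has minimum distance 4, the affine functions form an orthogonal array of
strength 3: on any set of at most three points they take every pattern of values equally often.
So the first three moments of `A` are those of independent uniform values, and with `q = 2^t`,
`n = 2^m`, the variable `X = q A - n` has mean `0`, second moment `s² = (q - 1) n` and third
moment `n (q - 1) (q - 2) ≥ 0`. Then `∑ (X - s) (X + s)² = ∑ X³ ≥ 0` forces `X ≥ s` for some `P`,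
which is a tuple of codewords at generalized distance at most `n - (n + s) / q` from `v`.
-/

open Finset

lemma Fintype.sum_eq_zero_of_add_right_eq_neg {G : Type*} [AddGroup G] [Fintype G]
    (g : G → ℝ) (d : G) (h : ∀ p, g (p + d) = -g p) : ∑ p, g p = 0 := by
  have hshift : ∑ p, g (p + d) = ∑ p, g p := Fintype.sum_equiv (Equiv.addRight d) _ _ fun _ => rfl
  simp only [h, sum_neg_distrib] at hshift
  linarith

lemma Fintype.sum_card_insert {α : Type*} [Fintype α] [DecidableEq α] (s : Finset α)
    (g : ℕ → ℝ) :
    ∑ z, g #(insert z s) = #s * g #s + (Fintype.card α - #s) * g (#s + 1) := by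
  have hsplit : ∀ z, g #(insert z s) = if z ∈ s then g #s else g (#s + 1) := by
    intro z
    split_ifs with hz
    · rw [insert_eq_of_mem hz]
    · rw [card_insert_of_notMem hz]
  simp only [hsplit, sum_ite, sum_const, filter_mem_eq_inter, univ_inter, nsmul_eq_mul]
  rw [filter_not, card_sdiff_of_subset (filter_subset _ _), filter_mem_eq_inter, univ_inter,
    card_univ, Nat.cast_sub (card_le_univ s)]

lemma Fintype.sum_sum_card_pair {α : Type*} [Fintype α] [DecidableEq α] (g : ℕ → ℝ) :
    ∑ x : α, ∑ y, g #{y, x} = Fintype.card α * (g 1 + (Fintype.card α - 1) * g 2) := by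
  simp only [Fintype.sum_card_insert, card_singleton, sum_const, card_univ, nsmul_eq_mul]
  push_cast
  ring

lemma Fintype.sum_sum_sum_card_triple {α : Type*} [Fintype α] [DecidableEq α] (g : ℕ → ℝ) :
    ∑ x : α, ∑ y, ∑ z, g #{z, y, x} = Fintype.card α * (g 1 + 3 * (Fintype.card α - 1) * g 2
      + (Fintype.card α - 1) * (Fintype.card α - 2) * g 3) := by
  simp only [Fintype.sum_card_insert {_, _} g,
    Fintype.sum_card_insert {_} (fun k => (k : ℝ) * g k + (Fintype.card α - k) * g (k + 1)),
    card_singleton, sum_const, card_univ, nsmul_eq_mul]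
  push_cast
  ring

lemma prod_insert_boole {α M₀ : Type*} [CommMonoidWithZero M₀] [DecidableEq α] (p : α → Prop)
    [DecidablePred p] (y : α) (s : Finset α) :
    ∏ w ∈ insert y s, (if p w then 1 else 0 : M₀)
      = (if p y then 1 else 0) * ∏ w ∈ s, (if p w then 1 else 0) := by
  simp only [prod_boole, forall_mem_insert, ite_zero_mul_ite_zero, mul_one]

lemma exists_le_of_sum_pow {ι : Type*} [Fintype ι] [Nonempty ι] (X : ι → ℝ) (s : ℝ)
    (h1 : ∑ i, X i = 0) (h2 : ∑ i, X i ^ 2 = Fintype.card ι * s ^ 2) (h3 : 0 ≤ ∑ i, X i ^ 3) :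
    ∃ i, s ≤ X i := by
  -- Otherwise every term of `∑ (X - s) (X + s)² = ∑ X³ ≥ 0` is `≤ 0`, so every `X i = -s`,
  -- and `∑ X = 0` forces `s = 0`.
  by_contra! hlt
  have hterm : ∀ i, (X i - s) * (X i + s) ^ 2 ≤ 0 := fun i =>
    mul_nonpos_of_nonpos_of_nonneg (by linarith [hlt i]) (sq_nonneg _)
  have hsum : ∑ i, (X i - s) * (X i + s) ^ 2 = ∑ i, X i ^ 3 := by
    have hexp : ∀ i, (X i - s) * (X i + s) ^ 2 = X i ^ 3 + s * X i ^ 2 - s ^ 2 * X i - s ^ 3 :=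
      fun i => by ring
    simp only [hexp, sum_add_distrib, sum_sub_distrib, ← mul_sum, h1, h2, sum_const, card_univ,
      nsmul_eq_mul]
    ring
  have hzero := (sum_eq_zero_iff_of_nonpos fun i _ => hterm i).mp
    (le_antisymm (sum_nonpos fun i _ => hterm i) (hsum ▸ h3))
  have hneg : ∀ i, X i = -s := fun i => by
    rcases mul_eq_zero.mp (hzero i (mem_univ i)) with h | h
    · linarith [hlt i]
    · linarith [pow_eq_zero_iff two_ne_zero |>.mp h]
  simp only [hneg, sum_const, card_univ, nsmul_eq_mul] at h1
  have hs : s = 0 := by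
    have : (0 : ℝ) < Fintype.card ι := Nat.cast_pos.mpr Fintype.card_pos
    nlinarith
  obtain ⟨i⟩ := ‹Nonempty ι›
  linarith [hlt i, hneg i]

lemma genCovDist_add_card_filter_forall_eq {ι F : Type*} [Fintype ι] [AddGroup F] [DecidableEq F]
    {t : ℕ} (v c : Fin t → ι → F) :
    genCovDist v c + #{x | ∀ i, c i x = v i x} = Fintype.card ι := by
  rw [← card_univ, ← card_filter_add_card_filter_not (s := univ) (fun x => ∀ i, c i x = v i x),
    add_comm]
  simp only [genCovDist, tWeight, Pi.sub_apply, ne_eq, sub_eq_zero, not_forall, eq_comm]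

lemma genCovRadius_le_of_forall_exists {ι F : Type*} [Fintype ι] [AddGroup F] {C : Set (ι → F)}
    {t : ℕ} {r : ℝ}
    (h : ∀ v : Fin t → ι → F, ∃ c : Fin t → ι → F, (∀ i, c i ∈ C) ∧ (genCovDist v c : ℝ) ≤ r) :
    (genCovRadius C t : ℝ) ≤ r := by
  have hr : 0 ≤ r := by
    obtain ⟨c, -, hc⟩ := h 0
    exact (Nat.cast_nonneg _).trans hc
  have hfloor : genCovRadius C t ≤ ⌊r⌋₊ := Nat.sInf_le fun v => by
    obtain ⟨c, hcC, hc⟩ := h v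
    exact ⟨c, hcC, Nat.le_floor hc⟩
  exact (Nat.cast_le.mpr hfloor).trans (Nat.floor_le hr)

noncomputable def chi (z : ZMod 2) : ℝ := if z = 0 then 1 else -1

lemma chi_add (a b : ZMod 2) : chi (a + b) = chi a * chi b := by
  have h01 : ∀ c : ZMod 2, c = 0 ∨ c = 1 := by decide
  rcases h01 a with rfl | rfl <;> rcases h01 b with rfl | rfl <;>
    simp [chi, show (1 : ZMod 2) + 1 = 0 by decide]

lemma chi_one : chi 1 = -1 := by norm_num [chi]

lemma boole_eq_one_add_chi_sub_div_two (a b : ZMod 2) :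
    (if a = b then 1 else 0 : ℝ) = (1 + chi (a - b)) / 2 := by
  by_cases h : a = b <;> simp [chi, h, sub_eq_zero]

section Affine

variable {m : ℕ}

def affineEval (p : (Fin m → ZMod 2) × ZMod 2) (x : Fin m → ZMod 2) : ZMod 2 := p.1 ⬝ᵥ x + p.2

lemma affineEval_add (p d : (Fin m → ZMod 2) × ZMod 2) (x : Fin m → ZMod 2) :
    affineEval (p + d) x = affineEval p x + affineEval d x := by
  simp only [affineEval, Prod.fst_add, Prod.snd_add, add_dotProduct]
  ring

lemma affineEval_mem_RM (p : (Fin m → ZMod 2) × ZMod 2) : affineEval p ∈ RM 1 m := by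
  refine ⟨∑ k, MvPolynomial.C (p.1 k) * MvPolynomial.X k + MvPolynomial.C p.2, ?_, fun x => ?_⟩
  · refine (MvPolynomial.totalDegree_add _ _).trans (max_le ?_ (by simp))
    refine (MvPolynomial.totalDegree_finsetSum _ _).trans (Finset.sup_le fun k _ => ?_)
    exact (MvPolynomial.totalDegree_mul _ _).trans (by simp)
  · simp [affineEval, dotProduct]

lemma sum_prod_chi_affineEval_eq_zero (f : (Fin m → ZMod 2) → ZMod 2)
    {T : Finset (Fin m → ZMod 2)} (hT : Odd #T ∨ #T = 2) :
    ∑ p : (Fin m → ZMod 2) × ZMod 2, ∏ x ∈ T, chi (affineEval p x - f x) = 0 := by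
  -- Shifting `p` by `(0, 1)` negates all `#T` factors; if `T = {x, y}` and `x j ≠ y j`, shifting
  -- by `(Pi.single j 1, 0)` negates exactly one of them.
  rcases hT with hodd | htwo
  · refine Fintype.sum_eq_zero_of_add_right_eq_neg _ (0, 1) fun p => ?_
    simp only [affineEval_add, show ∀ x, affineEval (0, 1) x = 1 by simp [affineEval],
      add_sub_right_comm _ (1 : ZMod 2), chi_add, chi_one, mul_neg_one, prod_neg, hodd.neg_one_pow,
      neg_one_mul]
  · obtain ⟨x, y, hxy, rfl⟩ := card_eq_two.mp htwo
    obtain ⟨j, hj⟩ := Function.ne_iff.mp hxy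
    have hflip : chi (x j) * chi (y j) = -1 := by
      rw [← chi_add, ← chi_one]
      congr 1
      revert hj; generalize x j = a; generalize y j = b; revert a b; decide
    refine Fintype.sum_eq_zero_of_add_right_eq_neg _ (Pi.single j 1, 0) fun p => ?_
    have hsingle : ∀ z, affineEval (Pi.single j 1, 0) z = z j := by simp [affineEval]
    simp only [prod_pair hxy, affineEval_add, hsingle, add_sub_right_comm _ (_ : ZMod 2), chi_add]
    linear_combination (chi (affineEval p x - f x) * chi (affineEval p y - f y)) * hflip

lemma sum_boole_forall_affineEval_eq (f : (Fin m → ZMod 2) → ZMod 2)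
    {S : Finset (Fin m → ZMod 2)} (hS : #S ≤ 3) :
    ∑ p : (Fin m → ZMod 2) × ZMod 2, (if ∀ x ∈ S, affineEval p x = f x then 1 else 0 : ℝ)
      = 2 ^ (m + 1) / 2 ^ #S := by
  -- Expanding `∏ x ∈ S, (1 + chi _) / 2` over subsets `T ⊆ S`, only `T = ∅` contributes.
  have hexpand : ∀ p : (Fin m → ZMod 2) × ZMod 2,
      (if ∀ x ∈ S, affineEval p x = f x then 1 else 0 : ℝ)
        = (∑ T ∈ S.powerset, ∏ x ∈ T, chi (affineEval p x - f x)) / 2 ^ #S := by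
    intro p
    rw [show (if ∀ x ∈ S, affineEval p x = f x then 1 else 0 : ℝ)
        = ∏ x ∈ S, (if affineEval p x = f x then 1 else 0 : ℝ) by simp only [prod_boole]; congr,
      ← prod_one_add, ← prod_const, ← prod_div_distrib]
    exact prod_congr rfl fun x _ => boole_eq_one_add_chi_sub_div_two _ _
  simp only [hexpand, ← sum_div, sum_comm (s := univ)]
  congr 1
  rw [sum_eq_single_of_mem ∅ (empty_mem_powerset S)]
  · simp [Fintype.card_pi, pow_succ]
  · intro T hTS hT
    have h1 : 1 ≤ #T := card_pos.mpr (nonempty_iff_ne_empty.mpr hT)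
    have h3 : #T ≤ 3 := (card_le_card (mem_powerset.mp hTS)).trans hS
    refine sum_prod_chi_affineEval_eq_zero f ?_
    interval_cases h : #T <;> simp [Nat.odd_iff]

end Affine

section Agreement

variable {m t : ℕ} (v : Fin t → (Fin m → ZMod 2) → ZMod 2)

def agreeCount (P : Fin t → (Fin m → ZMod 2) × ZMod 2) : ℕ :=
  #{x | ∀ i, affineEval (P i) x = v i x}

noncomputable def agreeIndicator (P : Fin t → (Fin m → ZMod 2) × ZMod 2) (x : Fin m → ZMod 2) :
    ℝ :=
  if ∀ i, affineEval (P i) x = v i x then 1 else 0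

lemma agreeCount_eq_sum (P : Fin t → (Fin m → ZMod 2) × ZMod 2) :
    (agreeCount v P : ℝ) = ∑ x, agreeIndicator v P x :=
  natCast_card_filter _ _

lemma sum_prod_agreeIndicator {S : Finset (Fin m → ZMod 2)} (hS : #S ≤ 3) :
    ∑ P : Fin t → (Fin m → ZMod 2) × ZMod 2, ∏ w ∈ S, agreeIndicator v P w
      = ((2 : ℝ) ^ (m + 1)) ^ t / (2 ^ t) ^ #S := by
  have hswap : ∀ P : Fin t → (Fin m → ZMod 2) × ZMod 2, ∏ w ∈ S, agreeIndicator v P w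
      = ∏ i, (if ∀ w ∈ S, affineEval (P i) w = v i w then 1 else 0) := fun P =>
    calc _ = ∏ w ∈ S, ∏ i, (if affineEval (P i) w = v i w then 1 else 0 : ℝ) :=
          prod_congr rfl fun w _ => by rw [agreeIndicator]; convert Fintype.prod_boole.symm
      _ = _ := prod_comm
      _ = _ := prod_congr rfl fun i _ => by convert prod_boole
  simp only [hswap]
  rw [← Fintype.prod_sum (fun i p => if ∀ w ∈ S, affineEval p w = v i w then (1 : ℝ) else 0)]
  simp only [sum_boole_forall_affineEval_eq _ hS, prod_const, card_univ, Fintype.card_fin]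
  rw [div_pow, pow_right_comm (2 : ℝ) #S t]

lemma sum_agreeCount :
    ∑ P, (agreeCount v P : ℝ) = 2 ^ m * (((2 : ℝ) ^ (m + 1)) ^ t / 2 ^ t) := by
  have hx : ∀ x, ∑ P, agreeIndicator v P x = ((2 : ℝ) ^ (m + 1)) ^ t / 2 ^ t := fun x => by
    simpa using sum_prod_agreeIndicator v (S := {x}) (by simp)
  simp [agreeCount_eq_sum, sum_comm (s := univ), hx]

lemma sum_agreeCount_sq :
    ∑ P, (agreeCount v P : ℝ) ^ 2 = 2 ^ m * (((2 : ℝ) ^ (m + 1)) ^ t / 2 ^ t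
      + (2 ^ m - 1) * (((2 : ℝ) ^ (m + 1)) ^ t / (2 ^ t) ^ 2)) := by
  have hexpand : ∀ P, (agreeCount v P : ℝ) ^ 2
      = ∑ x, ∑ y, ∏ w ∈ {y, x}, agreeIndicator v P w := fun P => by
    simp only [agreeCount_eq_sum, agreeIndicator, sq, sum_mul_sum, prod_insert_boole,
      prod_singleton]
    exact sum_congr rfl fun x _ => sum_congr rfl fun y _ => mul_comm _ _
  rw [sum_congr rfl fun P _ => hexpand P, sum_comm, sum_congr rfl fun x _ => sum_comm]
  simp only [sum_prod_agreeIndicator v (card_le_two.trans (by norm_num : 2 ≤ 3))]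
  rw [Fintype.sum_sum_card_pair (fun k => ((2 : ℝ) ^ (m + 1)) ^ t / (2 ^ t) ^ k)]
  simp

lemma sum_agreeCount_pow_three :
    ∑ P, (agreeCount v P : ℝ) ^ 3 = 2 ^ m * (((2 : ℝ) ^ (m + 1)) ^ t / 2 ^ t
      + 3 * (2 ^ m - 1) * (((2 : ℝ) ^ (m + 1)) ^ t / (2 ^ t) ^ 2)
      + (2 ^ m - 1) * (2 ^ m - 2) * (((2 : ℝ) ^ (m + 1)) ^ t / (2 ^ t) ^ 3)) := by
  have hexpand : ∀ P, (agreeCount v P : ℝ) ^ 3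
      = ∑ x, ∑ y, ∑ z, ∏ w ∈ {z, y, x}, agreeIndicator v P w := fun P => by
    simp only [agreeCount_eq_sum, agreeIndicator, pow_succ, pow_zero, one_mul, sum_mul, mul_sum,
      prod_insert_boole, prod_singleton]
    exact sum_congr rfl fun x _ => sum_congr rfl fun y _ => sum_congr rfl fun z _ => by ring
  rw [sum_congr rfl fun P _ => hexpand P, sum_comm, sum_congr rfl fun x _ => sum_comm,
    sum_congr rfl fun x _ => sum_congr rfl fun y _ => sum_comm]
  simp only [sum_prod_agreeIndicator v card_le_three]
  rw [Fintype.sum_sum_sum_card_triple (fun k => ((2 : ℝ) ^ (m + 1)) ^ t / (2 ^ t) ^ k)]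
  simp

lemma exists_agreeCount_ge :
    ∃ P, 2 ^ m + √((2 ^ t - 1) * 2 ^ m) ≤ 2 ^ t * (agreeCount v P : ℝ) := by
  have hcard : (Fintype.card (Fin t → (Fin m → ZMod 2) × ZMod 2) : ℝ)
      = ((2 : ℝ) ^ (m + 1)) ^ t := by
    simp [Fintype.card_pi, Fintype.card_prod, pow_succ]
  have hq : (1 : ℝ) ≤ 2 ^ t := one_le_pow₀ one_le_two
  have hs : √(((2 : ℝ) ^ t - 1) * 2 ^ m) ^ 2 = (2 ^ t - 1) * 2 ^ m :=
    Real.sq_sqrt (mul_nonneg (by linarith) (by positivity))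
  have hq12 : 0 ≤ ((2 : ℝ) ^ t - 1) * (2 ^ t - 2) := by
    rcases Nat.eq_zero_or_pos t with rfl | ht
    · simp
    · have : (2 : ℝ) ≤ 2 ^ t := by simpa using pow_le_pow_right₀ one_le_two ht
      nlinarith
  refine (exists_le_of_sum_pow (fun P => 2 ^ t * (agreeCount v P : ℝ) - 2 ^ m)
    (√((2 ^ t - 1) * 2 ^ m)) ?_ ?_ ?_).imp fun P hP => by linarith
  · simp only [sum_sub_distrib, ← mul_sum, sum_agreeCount, sum_const, card_univ, nsmul_eq_mul,
      hcard]
    field_simp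
    ring
  · have hexp : ∀ a : ℝ, ((2 : ℝ) ^ t * a - 2 ^ m) ^ 2
        = (2 ^ t) ^ 2 * a ^ 2 - 2 * 2 ^ t * 2 ^ m * a + (2 ^ m) ^ 2 := fun a => by ring
    simp only [hexp, sum_add_distrib, sum_sub_distrib, ← mul_sum, sum_agreeCount_sq,
      sum_agreeCount, sum_const, card_univ, nsmul_eq_mul, hcard, hs]
    field_simp
    ring
  · have hexp : ∀ a : ℝ, ((2 : ℝ) ^ t * a - 2 ^ m) ^ 3 = (2 ^ t) ^ 3 * a ^ 3
        - 3 * (2 ^ t) ^ 2 * 2 ^ m * a ^ 2 + 3 * 2 ^ t * (2 ^ m) ^ 2 * a - (2 ^ m) ^ 3 :=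
      fun a => by ring
    simp only [hexp, sum_add_distrib, sum_sub_distrib, ← mul_sum, sum_agreeCount_pow_three,
      sum_agreeCount_sq, sum_agreeCount, sum_const, card_univ, nsmul_eq_mul, hcard]
    refine (mul_nonneg (by positivity : (0 : ℝ) ≤ (2 ^ (m + 1)) ^ t * 2 ^ m) hq12).trans_eq ?_
    field_simp
    ring

end Agreement

theorem stmt12_general (m t : ℕ) :
    (genCovRadius (RM 1 m) t : ℝ) ≤
      (1 - 1 / 2 ^ t) * 2 ^ m
        - (Real.sqrt (2 ^ t - 1) / 2 ^ t) * (2 : ℝ) ^ ((m : ℝ) / 2) := by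
  refine genCovRadius_le_of_forall_exists fun v => ?_
  obtain ⟨P, hP⟩ := exists_agreeCount_ge v
  refine ⟨fun i => affineEval (P i), fun i => affineEval_mem_RM (P i), ?_⟩
  have hdist : (genCovDist v (fun i => affineEval (P i)) : ℝ) = 2 ^ m - agreeCount v P := by
    have h := genCovDist_add_card_filter_forall_eq v (fun i => affineEval (P i))
    rw [eq_sub_iff_add_eq, agreeCount, ← Nat.cast_add, h]
    simp
  have hsqrt : (2 : ℝ) ^ ((m : ℝ) / 2) = √(2 ^ m) := by
    rw [Real.sqrt_eq_rpow, ← Real.rpow_natCast, ← Real.rpow_mul zero_le_two]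
    ring_nf
  have hbound : (1 - 1 / 2 ^ t) * 2 ^ m - √(2 ^ t - 1) / 2 ^ t * (2 : ℝ) ^ ((m : ℝ) / 2)
      = 2 ^ m - (2 ^ m + √((2 ^ t - 1) * 2 ^ m)) / 2 ^ t := by
    rw [hsqrt, Real.sqrt_mul' _ (by positivity)]
    field_simp
    ring
  rw [hdist, hbound, sub_le_sub_iff_left, div_le_iff₀ (by positivity)]
  linarith

/-- R_t(1,m) ≤ (1 − 1/2^t)·2^m − (√(2^t − 1)/2^t)·2^{m/2}. -/
theorem stmt12 (m t : ℕ) (hm : 1 ≤ m) :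
    (genCovRadius (RM 1 m) t : ℝ) ≤
      (1 - 1 / 2 ^ t) * 2 ^ m
        - (Real.sqrt (2 ^ t - 1) / 2 ^ t) * (2 : ℝ) ^ ((m : ℝ) / 2) :=
  stmt12_general m t
end
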